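/- arXiv:math/0504426 — 4 statements merged into one kernel-verified Lean document; each statement's English description precedes it below -/
import Mathlib

section
/- For all x ∈ [0,1], Σ_{k≥1} 2^{-k} · log₂(x + 2^k)/(x + 2^k) ≤ 1. -/
theorem stmt_9 (x : ℝ) (hx : x ∈ Set.Icc (0:ℝ) 1) :
    ∑' k : ℕ, (2 ^ (k + 1) : ℝ)⁻¹ * (Real.logb 2 (x + 2 ^ (k + 1)) / (x + 2 ^ (k + 1))) ≤ 1 := by
  obtain ⟨hx0, hx1⟩ := hx
  set f : ℕ → ℝ := fun k => (2 ^ (k + 1) : ℝ)⁻¹ *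
    (Real.logb 2 (x + 2 ^ (k + 1)) / (x + 2 ^ (k + 1))) with hf
  set g : ℕ → ℝ := fun k => ((k : ℝ) + 2) * (1/4 : ℝ) ^ (k + 1) with hg
  have hs1 : Summable (fun k : ℕ => (k : ℝ) * (1/4 : ℝ) ^ k) := by
    have := summable_pow_mul_geometric_of_norm_lt_one (R := ℝ) 1
      (r := 1/4) (by norm_num)
    simpa using this
  have hs2 : Summable (fun k : ℕ => ((1/4 : ℝ)) ^ k) :=
    summable_geometric_of_lt_one (by norm_num) (by norm_num)
  have hgsum : Summable g := by
    have he : g = fun k : ℕ =>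
        (1/4 : ℝ) * ((k : ℝ) * (1/4) ^ k) + (1/2 : ℝ) * (1/4 : ℝ) ^ k := by
      funext k; simp only [hg]; ring
    rw [he]
    exact (hs1.mul_left _).add (hs2.mul_left _)
  have hbound : ∀ k : ℕ, f k ≤ g k := by
    intro k
    have hp : (0:ℝ) < 2 ^ (k+1) := by positivity
    have hD : (2:ℝ) ^ (k+1) ≤ x + 2 ^ (k+1) := by linarith
    have hD' : (0:ℝ) < x + 2 ^ (k+1) := lt_of_lt_of_le hp hD
    have h1 : x + 2 ^ (k+1) ≤ 2 ^ (k+2) := by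
      have h2 : (1:ℝ) ≤ 2 ^ (k+1) := one_le_pow₀ (by norm_num)
      have h3 : (2:ℝ) ^ (k+2) = 2 ^ (k+1) + 2 ^ (k+1) := by ring
      linarith
    have hL : Real.logb 2 (x + 2 ^ (k+1)) ≤ (k : ℝ) + 2 := by
      calc Real.logb 2 (x + 2 ^ (k+1)) ≤ Real.logb 2 (2 ^ (k+2)) :=
            Real.logb_le_logb_of_le (by norm_num) hD' h1
        _ = (k : ℝ) + 2 := by
            rw [Real.logb_pow, Real.logb_self_eq_one (by norm_num)]
            push_cast; ring
    have step : f k ≤ (2 ^ (k+1) : ℝ)⁻¹ * (((k : ℝ) + 2) / 2 ^ (k+1)) := by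
      apply mul_le_mul_of_nonneg_left _ (inv_nonneg.mpr hp.le)
      exact div_le_div₀ (by positivity) hL hp hD
    refine step.trans_eq ?_
    simp only [hg]
    rw [div_pow, one_pow, show (4:ℝ) = 2 * 2 by norm_num, mul_pow]
    field_simp
  have hfnn : ∀ k : ℕ, 0 ≤ f k := by
    intro k
    have hp : (0:ℝ) < 2 ^ (k+1) := by positivity
    have hD' : (0:ℝ) < x + 2 ^ (k+1) := by linarith
    have hL0 : 0 ≤ Real.logb 2 (x + 2 ^ (k+1)) := by
      apply Real.logb_nonneg (by norm_num)
      have : (1:ℝ) ≤ 2 ^ (k+1) := one_le_pow₀ (by norm_num)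
      linarith
    exact mul_nonneg (inv_nonneg.mpr hp.le) (div_nonneg hL0 hD'.le)
  have hfs : Summable f := Summable.of_nonneg_of_le hfnn hbound hgsum
  have h1 : ∑' k : ℕ, (k : ℝ) * (1/4 : ℝ) ^ k = (1/4) / (1 - 1/4) ^ 2 :=
    tsum_coe_mul_geometric_of_norm_lt_one (by norm_num : ‖(1/4 : ℝ)‖ < 1)
  have h2 : ∑' k : ℕ, ((1/4 : ℝ)) ^ k = (1 - 1/4)⁻¹ :=
    tsum_geometric_of_lt_one (by norm_num) (by norm_num)
  have hgval : ∑' k : ℕ, g k =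
      (1/4) * (∑' k : ℕ, (k : ℝ) * (1/4) ^ k) + (1/2) * (∑' k : ℕ, ((1/4 : ℝ)) ^ k) := by
    rw [← tsum_mul_left, ← tsum_mul_left,
      ← Summable.tsum_add (hs1.mul_left _) (hs2.mul_left _)]
    congr 1; funext k; simp only [hg]; ring
  calc ∑' k : ℕ, f k ≤ ∑' k : ℕ, g k := Summable.tsum_le_tsum hbound hfs hgsum
    _ ≤ 1 := by rw [hgval, h1, h2]; norm_num
end

section
/- If g : [0,1] → ℝ is decreasing, convex, g(0) = 1, and satisfies g(x) ≥ 1 + (3/2)·x·log₂ x − 5x for all x ∈ (0,1], then g is 1/2-Hölder continuous with Hölder constant at most 5, i.e., |g(x) − g(y)| ≤ 5·|x − y|^{1/2} for all x, y ∈ [0,1]. -/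
lemma key_ineq (h : ℝ) (hp : 0 < h) (h1 : h ≤ 1) :
    5 * h - 3 / 2 * h * Real.logb 2 h ≤ 5 * Real.sqrt h := by
  set s := Real.sqrt h with hs
  have hsp : 0 < s := Real.sqrt_pos.mpr hp
  have hsq : s ^ 2 = h := Real.sq_sqrt hp.le
  have hlogh : Real.log h = 2 * Real.log s := by
    rw [← hsq, Real.log_pow]; push_cast; ring
  have hlog2 : (0.6931471803 : ℝ) < Real.log 2 := Real.log_two_gt_d9
  have hlog2pos : (0:ℝ) < Real.log 2 := by linarith
  have hls : Real.log s⁻¹ ≤ s⁻¹ - 1 := Real.log_le_sub_one_of_pos (by positivity)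
  have hls' : -Real.log s ≤ s⁻¹ - 1 := by rwa [Real.log_inv] at hls
  have h2 : -(s * Real.log s) ≤ 1 - s := by
    have := mul_le_mul_of_nonneg_left hls' hsp.le
    rw [mul_sub, mul_inv_cancel₀ hsp.ne'] at this
    linarith
  have e : 5 * h - 3 / 2 * h * Real.logb 2 h
      = (5 * h * Real.log 2 - 3 / 2 * h * Real.log h) / Real.log 2 := by
    rw [Real.logb]; field_simp
  rw [e, div_le_iff₀ hlog2pos, hlogh, ← hsq]
  nlinarith [mul_le_mul_of_nonneg_left h2 (by linarith : (0:ℝ) ≤ 3 * s),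
    mul_pos hsp hsp, mul_nonneg (mul_nonneg hsp.le hsp.le) hlog2pos.le,
    mul_nonneg (sub_nonneg.mpr (Real.sqrt_le_one.mpr h1)) hsp.le]

theorem stmt_12 (g : ℝ → ℝ)
    (hanti : AntitoneOn g (Set.Icc (0:ℝ) 1))
    (hconv : ConvexOn ℝ (Set.Icc (0:ℝ) 1) g)
    (h0 : g 0 = 1)
    (hlow : ∀ x ∈ Set.Ioc (0:ℝ) 1, 1 + 3 / 2 * x * Real.logb 2 x - 5 * x ≤ g x) :
    ∀ x ∈ Set.Icc (0:ℝ) 1, ∀ y ∈ Set.Icc (0:ℝ) 1,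
      |g x - g y| ≤ 5 * |x - y| ^ ((1:ℝ) / 2) := by
  have main : ∀ x ∈ Set.Icc (0:ℝ) 1, ∀ y ∈ Set.Icc (0:ℝ) 1, x < y →
      g x - g y ≤ 5 * (y - x) ^ ((1:ℝ) / 2) := by
    intro x hx y hy hxy
    obtain ⟨hx0, hx1⟩ := hx
    obtain ⟨hy0, hy1⟩ := hy
    set d := y - x with hd
    have hdp : 0 < d := by simp [hd]; linarith
    have hd1 : d ≤ 1 := by simp [hd]; linarith
    have hdy : d ≤ y := by simp [hd]; linarith
    have hdmem : d ∈ Set.Icc (0:ℝ) 1 := ⟨hdp.le, hd1⟩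
    have hymem : y ∈ Set.Icc (0:ℝ) 1 := ⟨hy0, hy1⟩
    have hxmem : x ∈ Set.Icc (0:ℝ) 1 := ⟨hx0, hx1⟩
    have h0mem : (0:ℝ) ∈ Set.Icc (0:ℝ) 1 := ⟨le_refl 0, zero_le_one⟩
    have hyp : 0 < y := lt_of_lt_of_le hdp hdy
    -- slope(0,d) ≤ slope(0,y)
    have s1 : (g d - g 0) / (d - 0) ≤ (g y - g 0) / (y - 0) :=
      hconv.secant_mono h0mem hdmem hymem hdp.ne' hyp.ne' hdy
    -- slope(y,0) ≤ slope(y,x)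
    have s2 : (g 0 - g y) / (0 - y) ≤ (g x - g y) / (x - y) :=
      hconv.secant_mono hymem h0mem hxmem hyp.ne (ne_of_lt hxy) hx0
    have e1 : (g 0 - g y) / (0 - y) = (g y - g 0) / (y - 0) := by
      rw [← neg_div_neg_eq]; ring_nf
    have e2 : (g x - g y) / (x - y) = (g y - g x) / d := by
      rw [← neg_div_neg_eq]; rw [hd]; ring_nf
    rw [e1, e2] at s2
    have s3 : (g d - g 0) / d ≤ (g y - g x) / d := by
      calc (g d - g 0) / d = (g d - g 0) / (d - 0) := by rw [sub_zero]
        _ ≤ (g y - g 0) / (y - 0) := s1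
        _ ≤ (g y - g x) / d := s2
    have s4 : g d - g 0 ≤ g y - g x := by
      have := mul_le_mul_of_nonneg_right s3 hdp.le
      rwa [div_mul_cancel₀ _ hdp.ne', div_mul_cancel₀ _ hdp.ne'] at this
    have hl := hlow d ⟨hdp, hd1⟩
    have hk := key_ineq d hdp hd1
    have : g x - g y ≤ 5 * Real.sqrt d := by
      rw [h0] at s4; linarith
    rwa [Real.sqrt_eq_rpow] at this
  intro x hx y hy
  rcases lt_trichotomy x y with h | h | h
  · rw [abs_of_nonneg (by linarith [hanti hx hy h.le] : 0 ≤ g x - g y),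
      abs_of_nonpos (by linarith : x - y ≤ 0)]
    have e : -(x - y) = y - x := by ring
    rw [e]
    exact main x hx y hy h
  · simp [h]
  · rw [abs_of_nonpos (by linarith [hanti hy hx h.le] : g x - g y ≤ 0),
      abs_of_nonneg (by linarith : 0 ≤ x - y)]
    have := main y hy x hx h
    linarith
end

section
/- Let (fₙ) be a sequence of convex functions on [a,b], each differentiable on (a,b), converging uniformly to f. If f is differentiable at a point x₀ ∈ (a,b), then fₙ'(x₀) → f'(x₀). -/
/-!
For a convex function differentiable at `x₀`, the derivative at `x₀` is squeezed between the
slopes of chords on either side: `slope (f n) y₂ x₀ ≤ deriv (f n) x₀ ≤ slope (f n) x₀ y₁` for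
`y₂ < x₀ < y₁`. Slopes of chords with fixed endpoints pass to the pointwise limit, so
eventually `deriv (f n) x₀` lies, up to any `ε`, between `slope g y₂ x₀` and `slope g x₀ y₁`;
these tend to `deriv g x₀` as `y₁, y₂ → x₀`.
-/

open Filter Set Topology

section ConvexDerivLimit

variable {ι : Type*} {l : Filter ι} {s : Set ℝ} {f : ι → ℝ → ℝ} {g : ℝ → ℝ} {x₀ c : ℝ}

theorem tendsto_slope_of_tendsto {x y : ℝ} (hx : Tendsto (fun i => f i x) l (𝓝 (g x)))
    (hy : Tendsto (fun i => f i y) l (𝓝 (g y))) :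
    Tendsto (fun i => slope (f i) x y) l (𝓝 (slope g x y)) := by
  simp only [slope_def_field]
  exact (hy.sub hx).div_const _

theorem eventually_deriv_lt_of_convexOn (hconv : ∀ i, ConvexOn ℝ s (f i))
    (hdiff : ∀ i, DifferentiableAt ℝ (f i) x₀)
    (hlim : ∀ y ∈ s, Tendsto (fun i => f i y) l (𝓝 (g y))) (hs : s ∈ 𝓝 x₀)
    (hg : DifferentiableAt ℝ g x₀) (hc : deriv g x₀ < c) :
    ∀ᶠ i in l, deriv (f i) x₀ < c := by
  have hright := (hasDerivAt_iff_tendsto_slope_left_right.mp hg.hasDerivAt).2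
  obtain ⟨y, ⟨hslope, hy⟩, hxy⟩ : ∃ y, (slope g x₀ y < c ∧ y ∈ s) ∧ x₀ < y :=
    ((hright.eventually (gt_mem_nhds hc)).and (nhdsWithin_le_nhds hs)).and
      self_mem_nhdsWithin |>.exists
  have hx₀ : x₀ ∈ s := mem_of_mem_nhds hs
  filter_upwards [(tendsto_slope_of_tendsto (hlim x₀ hx₀) (hlim y hy)).eventually
    (gt_mem_nhds hslope)] with i hi
  exact ((hconv i).deriv_le_slope hx₀ hy hxy (hdiff i)).trans_lt hi

theorem eventually_lt_deriv_of_convexOn (hconv : ∀ i, ConvexOn ℝ s (f i))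
    (hdiff : ∀ i, DifferentiableAt ℝ (f i) x₀)
    (hlim : ∀ y ∈ s, Tendsto (fun i => f i y) l (𝓝 (g y))) (hs : s ∈ 𝓝 x₀)
    (hg : DifferentiableAt ℝ g x₀) (hc : c < deriv g x₀) :
    ∀ᶠ i in l, c < deriv (f i) x₀ := by
  have hleft := (hasDerivAt_iff_tendsto_slope_left_right.mp hg.hasDerivAt).1
  obtain ⟨y, ⟨hslope, hy⟩, hyx⟩ : ∃ y, (c < slope g x₀ y ∧ y ∈ s) ∧ y < x₀ :=
    ((hleft.eventually (lt_mem_nhds hc)).and (nhdsWithin_le_nhds hs)).and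
      self_mem_nhdsWithin |>.exists
  have hx₀ : x₀ ∈ s := mem_of_mem_nhds hs
  rw [slope_comm] at hslope
  filter_upwards [(tendsto_slope_of_tendsto (hlim y hy) (hlim x₀ hx₀)).eventually
    (lt_mem_nhds hslope)] with i hi
  exact hi.trans_le ((hconv i).slope_le_deriv hy hx₀ hyx (hdiff i))

theorem tendsto_deriv_of_convexOn (hconv : ∀ i, ConvexOn ℝ s (f i))
    (hdiff : ∀ i, DifferentiableAt ℝ (f i) x₀)
    (hlim : ∀ y ∈ s, Tendsto (fun i => f i y) l (𝓝 (g y))) (hs : s ∈ 𝓝 x₀)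
    (hg : DifferentiableAt ℝ g x₀) :
    Tendsto (fun i => deriv (f i) x₀) l (𝓝 (deriv g x₀)) :=
  tendsto_order.2 ⟨fun _ hc => eventually_lt_deriv_of_convexOn hconv hdiff hlim hs hg hc,
    fun _ hc => eventually_deriv_lt_of_convexOn hconv hdiff hlim hs hg hc⟩

end ConvexDerivLimit

theorem stmt_15_general (a b : ℝ) (f : ℕ → ℝ → ℝ) (g : ℝ → ℝ)
    (hconv : ∀ n, ConvexOn ℝ (Set.Icc a b) (f n))
    (hdiff : ∀ n, ∀ x ∈ Set.Ioo a b, DifferentiableAt ℝ (f n) x)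
    (hunif : TendstoUniformlyOn f g Filter.atTop (Set.Icc a b))
    (x₀ : ℝ) (hx₀ : x₀ ∈ Set.Ioo a b) (hg : DifferentiableAt ℝ g x₀) :
    Filter.Tendsto (fun n => deriv (f n) x₀) Filter.atTop (nhds (deriv g x₀)) :=
  tendsto_deriv_of_convexOn hconv (fun n => hdiff n x₀ hx₀) (fun _ hy => hunif.tendsto_at hy)
    (Icc_mem_nhds hx₀.1 hx₀.2) hg

theorem stmt_15 (a b : ℝ) (hab : a < b) (f : ℕ → ℝ → ℝ) (g : ℝ → ℝ)
    (hconv : ∀ n, ConvexOn ℝ (Set.Icc a b) (f n))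
    (hdiff : ∀ n, ∀ x ∈ Set.Ioo a b, DifferentiableAt ℝ (f n) x)
    (hunif : TendstoUniformlyOn f g Filter.atTop (Set.Icc a b))
    (x₀ : ℝ) (hx₀ : x₀ ∈ Set.Ioo a b) (hg : DifferentiableAt ℝ g x₀) :
    Filter.Tendsto (fun n => deriv (f n) x₀) Filter.atTop (nhds (deriv g x₀)) :=
  stmt_15_general a b f g hconv hdiff hunif x₀ hx₀ hg
end

section
/- The binary Euclidean operator B₂, defined by B₂(h)(x) = Σ_{k≥1} [ (1/(x+2^k))² h(x/(x+2^k)) + (1/(1+2^k x))² h(1/(1+2^k x)) ], satisfies ∫₀¹ |B₂(h)(t)| dt ≤ ∫₀¹ |h(t)| dt for all h ∈ L¹([0,1]); in particular B₂ is a bounded linear operator on L¹([0,1]) of norm at most 1. -/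
/-!
For `c > 0` the maps `x ↦ x / (x + c)` and `x ↦ 1 / (1 + c x)` send `[0, 1]` monotonically onto
`[0, 1/(1+c)]` and `[1/(1+c), 1]`, with derivatives of absolute value `c (x + c)⁻²` and
`c (1 + c x)⁻²`. Changing variables, the `k`-th term of `B2` (where `c = 2^(k+1)`) integrates a
nonnegative function over `[0, 1]` to `2^-(k+1)` times its integral, so `B2` acting on nonnegative
functions preserves the integral over `[0, 1]`. Applying this to a measurable majorant of `|h|`
that holds everywhere (so that composing with the maps is harmless) bounds `∫ |B2 h|` by `∫ |h|`.
-/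

noncomputable def B2 (h : ℝ → ℝ) (x : ℝ) : ℝ :=
  ∑' k : ℕ, ((x + 2 ^ (k + 1) : ℝ)⁻¹ ^ 2 * h (x / (x + 2 ^ (k + 1))) +
    ((1 + 2 ^ (k + 1) * x : ℝ)⁻¹ ^ 2) * h (1 / (1 + 2 ^ (k + 1) * x)))

open MeasureTheory Set ENNReal

namespace MeasureTheory

variable {α : Type*} [MeasurableSpace α] {μ : Measure α}

theorem _root_.AEMeasurable.exists_measurable_ge_lintegral_eq {f : α → ℝ≥0∞}
    (hf : AEMeasurable f μ) :
    ∃ g : α → ℝ≥0∞, Measurable g ∧ f ≤ g ∧ ∫⁻ x, g x ∂μ = ∫⁻ x, f x ∂μ := by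
  set N := toMeasurable μ {x | f x ≠ hf.mk f x}
  have hN : μ N = 0 := by rw [measure_toMeasurable]; exact ae_iff.1 hf.ae_eq_mk
  refine ⟨N.indicator ⊤ + hf.mk f,
    (measurable_const.indicator (measurableSet_toMeasurable _ _)).add hf.measurable_mk,
    fun x => ?_, lintegral_congr_ae ?_⟩
  · by_cases hx : x ∈ N
    · simp [indicator_of_mem hx]
    · have : f x = hf.mk f x := not_not.1 fun h => hx (subset_toMeasurable _ _ h)
      simp [indicator_of_notMem hx, this]
  · filter_upwards [measure_eq_zero_iff_ae_notMem.1 hN, hf.ae_eq_mk] with x hx hfx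
    simp [indicator_of_notMem hx, hfx]

theorem integral_abs_le_integral_abs_of_lintegral_enorm_le {f g : α → ℝ} (hg : Integrable g μ)
    (hfg : ∫⁻ x, ‖f x‖ₑ ∂μ ≤ ∫⁻ x, ‖g x‖ₑ ∂μ) : ∫ x, |f x| ∂μ ≤ ∫ x, |g x| ∂μ := by
  by_cases hf : Integrable (fun x => |f x|) μ
  · have toReal_lintegral {φ : α → ℝ} (hφ : AEStronglyMeasurable (fun x => |φ x|) μ) :
        ∫ x, |φ x| ∂μ = (∫⁻ x, ‖φ x‖ₑ ∂μ).toReal := by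
      simp only [integral_eq_lintegral_of_nonneg_ae (.of_forall fun x => abs_nonneg (φ x)) hφ,
        Real.enorm_eq_ofReal_abs]
    rw [toReal_lintegral hf.1, toReal_lintegral hg.abs.1]
    exact toReal_mono hg.2.ne hfg
  · rw [integral_undef hf]
    exact integral_nonneg fun x => abs_nonneg _

theorem lintegral_Icc_deriv_mul_of_monotoneOn {f f' : ℝ → ℝ} {a b : ℝ} (hab : a ≤ b)
    (hf' : ∀ x ∈ Icc a b, HasDerivWithinAt f (f' x) (Icc a b) x) (hf : MonotoneOn f (Icc a b))
    (u : ℝ → ℝ≥0∞) :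
    ∫⁻ x in Icc a b, ENNReal.ofReal (f' x) * u (f x) = ∫⁻ y in Icc (f a) (f b), u y := by
  have hcont : ContinuousOn f (Icc a b) := fun x hx => (hf' x hx).continuousWithinAt
  rw [← hcont.image_Icc_of_monotoneOn hab hf,
    lintegral_image_eq_lintegral_deriv_mul_of_monotoneOn measurableSet_Icc hf' hf]

theorem lintegral_Icc_neg_deriv_mul_of_antitoneOn {f f' : ℝ → ℝ} {a b : ℝ} (hab : a ≤ b)
    (hf' : ∀ x ∈ Icc a b, HasDerivWithinAt f (f' x) (Icc a b) x) (hf : AntitoneOn f (Icc a b))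
    (u : ℝ → ℝ≥0∞) :
    ∫⁻ x in Icc a b, ENNReal.ofReal (-f' x) * u (f x) = ∫⁻ y in Icc (f b) (f a), u y := by
  have hcont : ContinuousOn f (Icc a b) := fun x hx => (hf' x hx).continuousWithinAt
  rw [← hcont.image_Icc_of_antitoneOn hab hf,
    lintegral_image_eq_lintegral_deriv_mul_of_antitoneOn measurableSet_Icc hf' hf]

theorem lintegral_Icc_eq_add {a b c : ℝ} (hab : a ≤ b) (hbc : b ≤ c) (u : ℝ → ℝ≥0∞) :
    ∫⁻ y in Icc a c, u y = (∫⁻ y in Icc a b, u y) + ∫⁻ y in Icc b c, u y := by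
  rw [← Icc_union_Ioc_eq_Icc hab hbc,
    lintegral_union measurableSet_Ioc ((Iic_disjoint_Ioc le_rfl).mono_left Icc_subset_Iic_self),
    setLIntegral_congr Ioc_ae_eq_Icc]

end MeasureTheory

section Branches

variable {c : ℝ}

theorem lintegral_Icc_comp_div_add (hc : 0 < c) (u : ℝ → ℝ≥0∞) :
    ∫⁻ x in Icc (0 : ℝ) 1, ENNReal.ofReal (c * (x + c)⁻¹ ^ 2) * u (x / (x + c)) =
      ∫⁻ y in Icc 0 (1 + c)⁻¹, u y := by
  have hderiv (x : ℝ) (hx : x ∈ Icc (0 : ℝ) 1) :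
      HasDerivWithinAt (fun x => x / (x + c)) (c * (x + c)⁻¹ ^ 2) (Icc 0 1) x := by
    have hxc : x + c ≠ 0 := by linarith [hx.1]
    refine ((hasDerivAt_id x).div ((hasDerivAt_id x).add_const c) hxc).hasDerivWithinAt
      |>.congr_deriv ?_
    simp only [id]
    field_simp
    ring
  have hmono : MonotoneOn (fun x => x / (x + c)) (Icc 0 1) := by
    intro x hx y hy hxy
    dsimp only
    rw [div_le_div_iff₀ (by linarith [hx.1]) (by linarith [hy.1])]
    nlinarith
  convert lintegral_Icc_deriv_mul_of_monotoneOn zero_le_one hderiv hmono u using 2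
  simp

theorem lintegral_Icc_comp_one_div_one_add_mul (hc : 0 < c) (u : ℝ → ℝ≥0∞) :
    ∫⁻ x in Icc (0 : ℝ) 1, ENNReal.ofReal (c * (1 + c * x)⁻¹ ^ 2) * u (1 / (1 + c * x)) =
      ∫⁻ y in Icc (1 + c)⁻¹ 1, u y := by
  have hderiv (x : ℝ) (hx : x ∈ Icc (0 : ℝ) 1) :
      HasDerivWithinAt (fun x => 1 / (1 + c * x)) (-(c * (1 + c * x)⁻¹ ^ 2)) (Icc 0 1) x := by
    have hxc : 1 + c * x ≠ 0 := by nlinarith [hx.1]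
    refine ((hasDerivAt_const x (1 : ℝ)).div
      (((hasDerivAt_id x).const_mul c).const_add 1) hxc).hasDerivWithinAt |>.congr_deriv ?_
    simp only [id]
    field_simp
    ring
  have hanti : AntitoneOn (fun x => 1 / (1 + c * x)) (Icc 0 1) := by
    intro x hx y hy hxy
    dsimp only
    rw [div_le_div_iff₀ (by nlinarith [hy.1]) (by nlinarith [hx.1])]
    nlinarith
  convert lintegral_Icc_neg_deriv_mul_of_antitoneOn zero_le_one hderiv hanti u using 2 <;> simp

theorem lintegral_Icc_branches (hc : 0 < c) {u : ℝ → ℝ≥0∞} (hu : Measurable u) :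
    ∫⁻ x in Icc (0 : ℝ) 1, (ENNReal.ofReal ((x + c)⁻¹ ^ 2) * u (x / (x + c)) +
        ENNReal.ofReal ((1 + c * x)⁻¹ ^ 2) * u (1 / (1 + c * x))) =
      ENNReal.ofReal c⁻¹ * ∫⁻ y in Icc (0 : ℝ) 1, u y := by
  have hc₀ : (0 : ℝ) ≤ (1 + c)⁻¹ := by positivity
  have hc₁ : (1 + c)⁻¹ ≤ 1 := inv_le_one_of_one_le₀ (by linarith)
  have hcancel : ENNReal.ofReal c⁻¹ * ENNReal.ofReal c = 1 := by
    rw [← ENNReal.ofReal_mul (by positivity), inv_mul_cancel₀ hc.ne', ENNReal.ofReal_one]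
  conv_rhs => rw [lintegral_Icc_eq_add hc₀ hc₁, ← lintegral_Icc_comp_div_add hc,
    ← lintegral_Icc_comp_one_div_one_add_mul hc, ← lintegral_add_left (by fun_prop),
    ← lintegral_const_mul' _ _ ofReal_ne_top]
  refine lintegral_congr fun x => ?_
  rw [ENNReal.ofReal_mul hc.le, ENNReal.ofReal_mul hc.le, mul_assoc, mul_assoc, ← mul_add,
    ← mul_assoc, hcancel, one_mul]

end Branches

noncomputable def B2ENNReal (H : ℝ → ℝ≥0∞) (x : ℝ) : ℝ≥0∞ :=
  ∑' k : ℕ, (ENNReal.ofReal ((x + 2 ^ (k + 1))⁻¹ ^ 2) * H (x / (x + 2 ^ (k + 1))) +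
    ENNReal.ofReal ((1 + 2 ^ (k + 1) * x)⁻¹ ^ 2) * H (1 / (1 + 2 ^ (k + 1) * x)))

theorem enorm_B2_le_B2ENNReal {h : ℝ → ℝ} {H : ℝ → ℝ≥0∞} (hH : ∀ y, ‖h y‖ₑ ≤ H y) (x : ℝ) :
    ‖B2 h x‖ₑ ≤ B2ENNReal H x := by
  have hterm (a b : ℝ) : ‖a ^ 2 * h b‖ₑ ≤ ENNReal.ofReal (a ^ 2) * H b := by
    rw [enorm_mul, Real.enorm_of_nonneg (sq_nonneg a)]
    gcongr
    exact hH b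
  exact enorm_tsum_le_tsum_enorm.trans (ENNReal.tsum_le_tsum fun k =>
    (enorm_add_le _ _).trans (add_le_add (hterm _ _) (hterm _ _)))

theorem tsum_ofReal_inv_two_pow_succ : ∑' k : ℕ, ENNReal.ofReal ((2 : ℝ) ^ (k + 1))⁻¹ = 1 := by
  have hpow (k : ℕ) : ENNReal.ofReal ((2 : ℝ) ^ (k + 1))⁻¹ = 2⁻¹ ^ (k + 1) := by
    rw [ENNReal.ofReal_inv_of_pos (by positivity), ENNReal.ofReal_pow zero_le_two, ENNReal.inv_pow]
    simp
  simp only [hpow, ENNReal.tsum_geometric_add_one, ENNReal.one_sub_inv_two, inv_inv,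
    ENNReal.inv_mul_cancel two_ne_zero ofNat_ne_top]

theorem lintegral_Icc_B2ENNReal {H : ℝ → ℝ≥0∞} (hH : Measurable H) :
    ∫⁻ x in Icc (0 : ℝ) 1, B2ENNReal H x = ∫⁻ y in Icc (0 : ℝ) 1, H y := by
  unfold B2ENNReal
  rw [lintegral_tsum fun k => by fun_prop]
  simp only [lintegral_Icc_branches (pow_pos two_pos _) hH]
  rw [ENNReal.tsum_mul_right, tsum_ofReal_inv_two_pow_succ, one_mul]

theorem lintegral_Icc_enorm_B2_le {h : ℝ → ℝ} (hh : AEMeasurable h (volume.restrict (Icc 0 1))) :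
    ∫⁻ x in Icc (0 : ℝ) 1, ‖B2 h x‖ₑ ≤ ∫⁻ x in Icc (0 : ℝ) 1, ‖h x‖ₑ := by
  obtain ⟨H, hHm, hhH, hHint⟩ := hh.enorm.exists_measurable_ge_lintegral_eq
  calc ∫⁻ x in Icc (0 : ℝ) 1, ‖B2 h x‖ₑ ≤ ∫⁻ x in Icc (0 : ℝ) 1, B2ENNReal H x :=
        lintegral_mono (enorm_B2_le_B2ENNReal hhH)
    _ = ∫⁻ x in Icc (0 : ℝ) 1, ‖h x‖ₑ := by rw [lintegral_Icc_B2ENNReal hHm, hHint]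

theorem stmt_17 (h : ℝ → ℝ) (hint : MeasureTheory.IntegrableOn h (Set.Icc (0:ℝ) 1)) :
    ∫ t in Set.Icc (0:ℝ) 1, |B2 h t| ≤ ∫ t in Set.Icc (0:ℝ) 1, |h t| :=
  integral_abs_le_integral_abs_of_lintegral_enorm_le hint
    (lintegral_Icc_enorm_B2_le hint.aemeasurable)
end
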